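/- Let (H, B) be a cocommutative Rota-Baxter Hopf algebra with T(g) := S(B(g₍₁₎))·S(g₍₂₎)·B(g₍₃₎). Then for all h ∈ H: (i) B(h₍₁₎)·B(T(h₍₂₎)) = ε(h)1, and (ii) B∘T = S∘B. -/

import Mathlib

open scoped TensorProduct
open Coalgebra

variable (R H : Type*) [CommRing R] [AddCommGroup H] [Module R H] [Coalgebra R H]

/-- A Hopf algebra structure (multiplication, unit, antipode) on the coalgebra `H`:
the multiplication is associative with unit, comultiplication and counit are algebra
maps, and `S` is an antipode (expressed via arbitrary Sweedler representations). -/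
structure HopfMul where
  mul : H →ₗ[R] H →ₗ[R] H
  one : H
  S : H →ₗ[R] H
  mul_assoc : ∀ a b c : H, mul (mul a b) c = mul a (mul b c)
  one_mul : ∀ a : H, mul one a = a
  mul_one : ∀ a : H, mul a one = a
  comul_mul : ∀ (a b : H) {ι₁ ι₂ : Type*} (ra : Coalgebra.Repr R a ι₁) (rb : Coalgebra.Repr R b ι₂),
    comul (R := R) (mul a b) = ∑ i ∈ ra.index, ∑ j ∈ rb.index,
      mul (ra.left i) (rb.left j) ⊗ₜ[R] mul (ra.right i) (rb.right j)
  comul_one : comul (R := R) one = one ⊗ₜ[R] one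
  counit_mul : ∀ a b : H, counit (R := R) (mul a b) = counit (R := R) a * counit (R := R) b
  counit_one : counit (R := R) one = 1
  S_mul_left : ∀ (a : H) {ι : Type*} (r : Coalgebra.Repr R a ι),
    ∑ i ∈ r.index, mul (S (r.left i)) (r.right i) = counit (R := R) a • one
  S_mul_right : ∀ (a : H) {ι : Type*} (r : Coalgebra.Repr R a ι),
    ∑ i ∈ r.index, mul (r.left i) (S (r.right i)) = counit (R := R) a • one

/-- Cocommutativity of the coalgebra `H`. -/
def Cocomm : Prop :=
  ∀ a : H, TensorProduct.comm R H H (comul (R := R) a) = comul (R := R) a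

/-- A Rota-Baxter operator on the (cocommutative) Hopf algebra `(H, h)`: a coalgebra
homomorphism `B` satisfying `B(a)B(b) = B(a₍₁₎·B(a₍₂₎)·b·S(B(a₍₃₎)))`. -/
structure RotaBaxter (h : HopfMul R H) where
  B : H →ₗ[R] H
  comul_B : ∀ (a : H) {ι : Type*} (r : Coalgebra.Repr R a ι),
    comul (R := R) (B a) = ∑ i ∈ r.index, B (r.left i) ⊗ₜ[R] B (r.right i)
  counit_B : ∀ a : H, counit (R := R) (B a) = counit (R := R) a
  rb : ∀ (a b : H) {ι : Type*} (r : Coalgebra.Repr R a ι)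
      {κ : ι → Type*} (r2 : ∀ i : ι, Coalgebra.Repr R (r.right i) (κ i)),
    h.mul (B a) (B b) = ∑ i ∈ r.index, ∑ j ∈ (r2 i).index,
      B (h.mul (h.mul (h.mul (r.left i) (B ((r2 i).left j))) b)
        (h.S (B ((r2 i).right j))))

/-!
All computations take place in the convolution monoid `(H →ₗ H, ⋆, u ∘ ε)`, in which
`T = (S ∘ B) ⋆ S ⋆ B`. Since `B` is a coalgebra map, `S ∘ B` is a two-sided convolution inverse
of `B`, hence `B ⋆ T = S ⋆ B`. The Rota-Baxter identity rewrites `B ⋆ (B ∘ L)` as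
`B ∘ (id ⋆ B ⋆ L ⋆ (S ∘ B))`, once cocommutativity has moved the factor `L(h₍₂₎)` into the middle
of the Sweedler sum. For `L = T` the inner product collapses to `id ⋆ S ⋆ B ⋆ (S ∘ B) = u ∘ ε`, and
`B(1) = 1` gives (i). Finally `B ∘ T = (S ∘ B) ⋆ B ⋆ (B ∘ T) = S ∘ B` by (i).
-/

universe w

namespace Coalgebra

open _root_.TensorProduct

variable {R A : Type*} [CommSemiring R] [AddCommMonoid A] [Module R A]

/-- The axioms of `HopfMul` and `RotaBaxter` quantify over representations indexed in fixed
universes; this transports a representation into any universe. -/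
noncomputable def Repr.ulift [CoalgebraStruct R A] {ι : Type*} {a : A} (r : Repr R a ι) :
    Repr R a (ULift.{w} (Fin r.index.card)) where
  index := Finset.univ
  left i := r.left (r.index.equivFin.symm i.down)
  right i := r.right (r.index.equivFin.symm i.down)
  eq := by
    rw [← r.eq, ← Finset.sum_coe_sort r.index, ← r.index.equivFin.symm.sum_comp]
    exact Equiv.ulift.sum_comp
      (fun j => r.left (r.index.equivFin.symm j) ⊗ₜ[R] r.right (r.index.equivFin.symm j))

lemma Repr.sum_map_tmul_map [CoalgebraStruct R A] {B C : Type*} [AddCommMonoid B] [Module R B]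
    [AddCommMonoid C] [Module R C] {ι : Type*} {a : A} (r : Repr R a ι)
    (f : A →ₗ[R] B) (g : A →ₗ[R] C) :
    ∑ i ∈ r.index, f (r.left i) ⊗ₜ[R] g (r.right i) = map f g (comul a) := by
  simp [← r.eq]

lemma rightComm_comp_rTensor_comul_comp_comul [Coalgebra R A] [IsCocomm R A] :
    (rightComm R A A A).toLinearMap ∘ₗ comul.rTensor A ∘ₗ comul (R := R) =
      comul.rTensor A ∘ₗ comul := by
  simp only [coassoc_simps]

end Coalgebra

namespace HopfMul

open TensorProduct

variable {R H}
variable (h : HopfMul R H)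

noncomputable def conv (f g : H →ₗ[R] H) : H →ₗ[R] H := lift h.mul ∘ₗ map f g ∘ₗ comul

noncomputable def unit : H →ₗ[R] H := LinearMap.toSpanSingleton R H h.one ∘ₗ counit

lemma unit_apply (a : H) : h.unit a = counit (R := R) a • h.one := rfl

lemma conv_apply {ι : Type*} {a : H} (r : Coalgebra.Repr R a ι) (f g : H →ₗ[R] H) :
    h.conv f g a = ∑ i ∈ r.index, h.mul (f (r.left i)) (g (r.right i)) := by
  simp [conv, ← r.eq]

lemma conv_apply_one (f g : H →ₗ[R] H) : h.conv f g h.one = h.mul (f h.one) (g h.one) := by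
  simp [conv, h.comul_one]

lemma conv_assoc (f g k : H →ₗ[R] H) : h.conv (h.conv f g) k = h.conv f (h.conv g k) := by
  have mul_mul : lift h.mul ∘ₗ (lift h.mul).rTensor H =
      lift h.mul ∘ₗ (lift h.mul).lTensor H ∘ₗ (TensorProduct.assoc R H H H).toLinearMap := by
    ext
    simp [h.mul_assoc]
  calc h.conv (h.conv f g) k
      = (lift h.mul ∘ₗ (lift h.mul).rTensor H) ∘ₗ map (map f g) k ∘ₗ
          comul.rTensor H ∘ₗ comul := by
        ext a
        simp only [conv, LinearMap.comp_apply, LinearMap.rTensor_map, LinearMap.map_rTensor]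
    _ = lift h.mul ∘ₗ (lift h.mul).lTensor H ∘ₗ map f (map g k) ∘ₗ
          (TensorProduct.assoc R H H H).toLinearMap ∘ₗ comul.rTensor H ∘ₗ comul := by
        rw [mul_mul]
        ext a
        simp only [LinearMap.comp_apply, LinearEquiv.coe_coe, map_map_assoc]
    _ = h.conv f (h.conv g k) := by
        rw [Coalgebra.coassoc]
        ext a
        simp only [conv, LinearMap.comp_apply, LinearMap.lTensor_map, LinearMap.map_lTensor]

lemma unit_conv (f : H →ₗ[R] H) : h.conv h.unit f = f := by
  ext a
  rw [conv, LinearMap.comp_apply, LinearMap.comp_apply, unit, ← LinearMap.map_rTensor,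
    Coalgebra.rTensor_counit_comul]
  simp [h.one_mul]

lemma conv_unit (f : H →ₗ[R] H) : h.conv f h.unit = f := by
  ext a
  rw [conv, LinearMap.comp_apply, LinearMap.comp_apply, unit, ← LinearMap.map_lTensor,
    Coalgebra.lTensor_counit_comul]
  simp [h.mul_one]

lemma id_conv_S : h.conv LinearMap.id h.S = h.unit := by
  ext a
  rw [h.conv_apply (ℛ R a).ulift]
  exact h.S_mul_right a _

lemma S_conv_id : h.conv h.S LinearMap.id = h.unit := by
  ext a
  rw [h.conv_apply (ℛ R a).ulift]
  exact h.S_mul_left a _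

lemma mul_flip_comp_conv (b : H) (f g : H →ₗ[R] H) :
    h.mul.flip b ∘ₗ h.conv f g = h.conv f (h.mul.flip b ∘ₗ g) := by
  ext a
  simp [h.conv_apply (ℛ R a), map_sum, h.mul_assoc]

/-- Cocommutativity in Sweedler form:
`∑ P(x₍₁₎)·L(x₍₃₎)·Q(x₍₂₎) = ∑ P(x₍₁₎)·L(x₍₂₎)·Q(x₍₃₎)`. -/
lemma sum_conv_mul_flip_comp [Coalgebra.IsCocomm R H] (P L Q : H →ₗ[R] H) {x : H} {ι : Type*}
    (r : Coalgebra.Repr R x ι) :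
    ∑ i ∈ r.index, h.conv (h.mul.flip (L (r.right i)) ∘ₗ P) Q (r.left i) =
      h.conv (h.conv P L) Q x := by
  set Ψ : (H ⊗[R] H) ⊗[R] H →ₗ[R] H := lift h.mul ∘ₗ map (lift h.mul ∘ₗ map P L) Q
  have sandwich (y c : H) : h.conv (h.mul.flip (L c) ∘ₗ P) Q y =
      Ψ (rightComm R H H H (comul y ⊗ₜ c)) := by
    simp only [conv, LinearMap.comp_apply]
    induction comul (R := R) y using TensorProduct.induction_on with
    | zero => simp
    | tmul a b => simp [Ψ]
    | add s t hs ht => simp [add_tmul, hs, ht]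
  calc ∑ i ∈ r.index, h.conv (h.mul.flip (L (r.right i)) ∘ₗ P) Q (r.left i)
      = Ψ (rightComm R H H H (comul.rTensor H (comul x))) := by
        simp only [sandwich, ← r.eq, map_sum, LinearMap.rTensor_tmul]
    _ = Ψ (comul.rTensor H (comul x)) :=
        congrArg Ψ (LinearMap.congr_fun Coalgebra.rightComm_comp_rTensor_comul_comp_comul x)
    _ = h.conv (h.conv P L) Q x := by simp [Ψ, conv, LinearMap.comp_assoc]

end HopfMul

namespace RotaBaxter

open TensorProduct

variable {R H} {h : HopfMul R H} (rb : RotaBaxter R H h)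

lemma comul_B_apply (a : H) : comul (R := R) (rb.B a) = map rb.B rb.B (comul a) :=
  (rb.comul_B a (ℛ R a).ulift).trans ((ℛ R a).ulift.sum_map_tmul_map rb.B rb.B)

lemma conv_comp_B (f g : H →ₗ[R] H) :
    h.conv (f ∘ₗ rb.B) (g ∘ₗ rb.B) = h.conv f g ∘ₗ rb.B := by
  ext a
  simp [HopfMul.conv, comul_B_apply, TensorProduct.map_map]

lemma unit_comp_B : h.unit ∘ₗ rb.B = h.unit := by
  ext a
  simp [HopfMul.unit, rb.counit_B]

lemma B_conv_S_comp_B : h.conv rb.B (h.S ∘ₗ rb.B) = h.unit := by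
  simpa [h.id_conv_S, unit_comp_B] using rb.conv_comp_B LinearMap.id h.S

lemma S_comp_B_conv_B : h.conv (h.S ∘ₗ rb.B) rb.B = h.unit := by
  simpa [h.S_conv_id, unit_comp_B] using rb.conv_comp_B h.S LinearMap.id

lemma mul_B_B (a b : H) :
    h.mul (rb.B a) (rb.B b) =
      rb.B (h.conv (h.mul.flip b ∘ₗ h.conv LinearMap.id rb.B) (h.S ∘ₗ rb.B) a) := by
  rw [h.mul_flip_comp_conv, h.conv_assoc, h.conv_apply (ℛ R a).ulift, map_sum,
    rb.rb a b (ℛ R a).ulift (fun i => (ℛ R _).ulift)]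
  refine Finset.sum_congr rfl fun i _ => ?_
  rw [h.conv_apply (ℛ R _).ulift, map_sum, map_sum]
  exact Finset.sum_congr rfl fun j _ => by simp [h.mul_assoc]

lemma mul_B_B_one (a : H) : h.mul (rb.B a) (rb.B h.one) = rb.B a := by
  have mul_one_eq_id : h.mul.flip h.one = LinearMap.id := LinearMap.ext h.mul_one
  rw [mul_B_B, mul_one_eq_id, LinearMap.id_comp, h.conv_assoc, B_conv_S_comp_B, h.conv_unit,
    LinearMap.id_apply]

lemma B_one : rb.B h.one = h.one := by
  have S_B_mul_B : h.mul (h.S (rb.B h.one)) (rb.B h.one) = h.one := by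
    simpa [h.conv_apply_one, HopfMul.unit_apply, rb.counit_B, h.counit_one] using
      congr($(rb.S_comp_B_conv_B) h.one)
  calc rb.B h.one = h.mul (h.mul (h.S (rb.B h.one)) (rb.B h.one)) (rb.B h.one) := by
        rw [S_B_mul_B, h.one_mul]
    _ = h.one := by rw [h.mul_assoc, mul_B_B_one, S_B_mul_B]

/-- The antipode `T` of the descendent Hopf algebra `H_B`, `T(g) = S(B(g₍₁₎))·S(g₍₂₎)·B(g₍₃₎)`. -/
noncomputable def descAntipode : H →ₗ[R] H := h.conv (h.S ∘ₗ rb.B) (h.conv h.S rb.B)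

lemma descAntipode_apply (g : H) {ι : Type*} (r : Coalgebra.Repr R g ι)
    {κ : ι → Type*} (r2 : ∀ i : ι, Coalgebra.Repr R (r.right i) (κ i)) :
    rb.descAntipode g = ∑ i ∈ r.index, ∑ j ∈ (r2 i).index,
      h.mul (h.mul (h.S (rb.B (r.left i))) (h.S ((r2 i).left j))) (rb.B ((r2 i).right j)) := by
  rw [descAntipode, h.conv_apply r]
  refine Finset.sum_congr rfl fun i _ => ?_
  simp [h.conv_apply (r2 i), map_sum, h.mul_assoc]

lemma B_conv_descAntipode : h.conv rb.B rb.descAntipode = h.conv h.S rb.B := by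
  rw [descAntipode, ← h.conv_assoc, B_conv_S_comp_B, h.unit_conv]

lemma B_conv_B_comp [Coalgebra.IsCocomm R H] (L : H →ₗ[R] H) :
    h.conv rb.B (rb.B ∘ₗ L) =
      rb.B ∘ₗ h.conv (h.conv (h.conv LinearMap.id rb.B) L) (h.S ∘ₗ rb.B) := by
  ext x
  rw [h.conv_apply (ℛ R x), LinearMap.comp_apply, ← h.sum_conv_mul_flip_comp _ _ _ (ℛ R x),
    map_sum]
  exact Finset.sum_congr rfl fun i _ => rb.mul_B_B _ _

lemma B_conv_B_comp_descAntipode [Coalgebra.IsCocomm R H] :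
    h.conv rb.B (rb.B ∘ₗ rb.descAntipode) = h.unit := by
  rw [B_conv_B_comp, h.conv_assoc LinearMap.id rb.B, B_conv_descAntipode, ← h.conv_assoc,
    h.id_conv_S, h.unit_conv, B_conv_S_comp_B]
  ext x
  simp [HopfMul.unit_apply, B_one]

lemma B_comp_descAntipode [Coalgebra.IsCocomm R H] :
    rb.B ∘ₗ rb.descAntipode = h.S ∘ₗ rb.B := by
  rw [← h.unit_conv (rb.B ∘ₗ _), ← S_comp_B_conv_B, h.conv_assoc, B_conv_B_comp_descAntipode,
    h.conv_unit]

end RotaBaxter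

/-- For a cocommutative Rota-Baxter Hopf algebra with
`T(g) := S(B(g₍₁₎))·S(g₍₂₎)·B(g₍₃₎)`: `B(h₍₁₎)·B(T(h₍₂₎)) = ε(h)1` and `B∘T = S∘B`. -/
theorem rotaBaxter_T_identities (h : HopfMul R H) (hc : Cocomm R H)
    (rb : RotaBaxter R H h) (T : H → H)
    (hT : ∀ (g : H) {ι : Type*} (r : Coalgebra.Repr R g ι)
        {κ : ι → Type*} (r2 : ∀ i : ι, Coalgebra.Repr R (r.right i) (κ i)),
      T g = ∑ i ∈ r.index, ∑ j ∈ (r2 i).index,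
        h.mul (h.mul (h.S (rb.B (r.left i))) (h.S ((r2 i).left j)))
          (rb.B ((r2 i).right j))) :
    (∀ (a : H) {ι : Type*} (r : Coalgebra.Repr R a ι),
      ∑ i ∈ r.index, h.mul (rb.B (r.left i)) (rb.B (T (r.right i))) =
        counit (R := R) a • h.one) ∧
    (∀ x : H, rb.B (T x) = h.S (rb.B x)) := by
  have : Coalgebra.IsCocomm R H := ⟨LinearMap.ext hc⟩
  have T_eq (g : H) : T g = rb.descAntipode g := by
    rw [hT g (ℛ R g).ulift (fun i => (ℛ R _).ulift), rb.descAntipode_apply]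
  refine ⟨fun a _ r => ?_, fun x => ?_⟩
  · simpa [T_eq, h.conv_apply r, HopfMul.unit_apply] using
      congr($(rb.B_conv_B_comp_descAntipode) a)
  · simpa [T_eq] using congr($(rb.B_comp_descAntipode) x)
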